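/- Let g = 0, and let (x, τ) be a solution on (0,1)×(0,T) of ẍ = (τ x')', |x'| = 1, with x(1,t)=0, τ(0,t)=0, where τ solves the associated two-point boundary value problem −τ'' + |x''|²τ = |ẋ'|², τ(0)=0, τ'(1)=0 at each time. If inf_{(s,t)} τ(s,t)/s ≤ 0, then ẋ ≡ 0, x(s,t) ≡ x(s,0), and τ ≡ 0. -/

import Mathlib

/-!
At each time `τ(·, t)` solves `-τ'' + |x''|² τ = |ẋ'|²`, `τ(0) = 0`, `τ'(1) = 0`. By the maximum
principle `τ ≥ 0`, and the integrating factors `exp (∓k s)`, with `k² ≥ sup |x''|²`, give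
`τ(s, t) ≥ s e^{-2k} ∫₀¹ y |ẋ'(y, t)|² dy`, whose right-hand side is continuous in `t`. If
`inf τ/s ≤ 0`, this weighted integral vanishes where it is minimal, at some `t₀`; then
`ẋ'(·, t₀) = 0`, and `ẋ(·, t₀) = 0` because `ẋ(1, t₀) = 0`.

Since `|x'| = 1` forces `x'·ẋ' = 0`, integrating by parts in `ẍ = (τ x')'` gives
`∫₀¹ ẋ·ẍ = -∫₀¹ τ x'·ẋ' = 0`: the kinetic energy `∫₀¹ |ẋ|²` is conserved (this uses `∂ₛ ẋ = ẋ'`,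
the symmetry of mixed partials). It vanishes at `t₀`, hence always, so `ẋ ≡ 0`, `x` is constant in
time, `ẋ' ≡ 0`, and the boundary value problem with zero source forces `τ ≡ 0`.
-/

open MeasureTheory Set Topology intervalIntegral Real
open scoped RealInnerProductSpace

section Interval

variable {E : Type*} [NormedAddCommGroup E] [NormedSpace ℝ E] {a b : ℝ}

theorem hasDerivWithinAt_integral_Icc [CompleteSpace E] {g : ℝ → E} {x : ℝ} (hab : a ≤ b)
    (hg : ContinuousOn g (Icc a b)) (hx : x ∈ Icc a b) :
    HasDerivWithinAt (fun s => ∫ y in a..s, g y) (g x) (Icc a b) x := by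
  set g' : ℝ → E := IccExtend hab (domRestrict (Icc a b) g)
  have hg'g : EqOn g' g (Icc a b) := fun y hy => IccExtend_of_mem hab _ hy
  have hg' : Continuous g' := continuous_IccExtend_iff.2 hg.domRestrict
  refine (hg'.integral_hasStrictDerivAt a x).hasDerivAt.hasDerivWithinAt.congr
    (fun s hs => integral_congr fun y hy => (hg'g ?_).symm)
    (integral_congr fun y hy => (hg'g ?_).symm)
    |>.congr_deriv (hg'g hx)
  · rw [uIcc_of_le hs.1] at hy; exact Icc_subset_Icc le_rfl hs.2 hy
  · rw [uIcc_of_le hx.1] at hy; exact Icc_subset_Icc le_rfl hx.2 hy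

theorem hasDerivWithinAt_integral_Icc_left [CompleteSpace E] {g : ℝ → E} {x : ℝ} (hab : a ≤ b)
    (hg : ContinuousOn g (Icc a b)) (hx : x ∈ Icc a b) :
    HasDerivWithinAt (fun s => ∫ y in s..b, g y) (-g x) (Icc a b) x := by
  have hint : ∀ s ∈ Icc a b, IntervalIntegrable g volume a s := fun s hs =>
    (hg.mono (Icc_subset_Icc le_rfl hs.2)).intervalIntegrable_of_Icc hs.1
  refine ((hasDerivWithinAt_integral_Icc hab hg hx).const_sub (∫ y in a..b, g y)).congr
    (fun s hs => ?_) ?_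
  · exact (integral_interval_sub_left (hint b (right_mem_Icc.2 hab)) (hint s hs)).symm
  · exact (integral_interval_sub_left (hint b (right_mem_Icc.2 hab)) (hint x hx)).symm

theorem eq_zero_of_hasDerivWithinAt_of_forall_eq {f : ℝ → E} {f' c : E} {S : Set ℝ} {x : ℝ}
    (hS : UniqueDiffWithinAt ℝ S x) (hf : HasDerivWithinAt f f' S x) (hc : ∀ y ∈ S, f y = c)
    (hx : x ∈ S) : f' = 0 :=
  hS.eq_deriv _ hf ((hasDerivWithinAt_const x S c).congr hc (hc x hx))

theorem integral_eq_sub_of_hasDerivWithinAt_Icc [CompleteSpace E] {f f' : ℝ → E} (hab : a ≤ b)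
    (hf : ∀ x ∈ Icc a b, HasDerivWithinAt f (f' x) (Icc a b) x)
    (hf' : ContinuousOn f' (Icc a b)) : ∫ x in a..b, f' x = f b - f a :=
  integral_eq_sub_of_hasDerivAt_of_le hab (fun x hx => (hf x hx).continuousWithinAt)
    (fun x hx => (hf x (Ioo_subset_Icc_self hx)).hasDerivAt (Icc_mem_nhds hx.1 hx.2))
    (hf'.intervalIntegrable_of_Icc hab)

theorem eq_of_hasDerivWithinAt_Icc_eq_zero {f f' : ℝ → E}
    (hf : ∀ x ∈ Icc a b, HasDerivWithinAt f (f' x) (Icc a b) x)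
    (hf' : ∀ x ∈ Icc a b, f' x = 0) : ∀ x ∈ Icc a b, f x = f a := fun x hx => by
  simpa [sub_eq_zero] using norm_image_sub_le_of_norm_deriv_le_segment' hf
    (fun y hy => (norm_le_zero_iff.2 (hf' y (Ico_subset_Icc_self hy)))) x hx

theorem eq_zero_of_integral_eq_zero {g : ℝ → ℝ} (hab : a < b)
    (hg : ContinuousOn g (Icc a b)) (hg0 : ∀ x ∈ Icc a b, 0 ≤ g x)
    (hint : ∫ x in a..b, g x = 0) {x : ℝ} (hx : x ∈ Icc a b) : g x = 0 :=
  ((hg0 x hx).eq_or_lt.resolve_right fun hpos => (integral_pos hab hg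
    (fun y hy => hg0 y (Ioc_subset_Icc_self hy)) ⟨x, hx, hpos⟩).ne' hint).symm

theorem eq_zero_of_integral_id_mul_eq_zero {g : ℝ → ℝ} (hg : ContinuousOn g (Icc 0 1))
    (hg0 : ∀ x ∈ Icc (0:ℝ) 1, 0 ≤ g x) (hint : ∫ x in (0:ℝ)..1, x * g x = 0) :
    ∀ x ∈ Icc (0:ℝ) 1, g x = 0 := by
  refine EqOn.of_subset_closure (s := Ioc 0 1) (fun x hx => ?_) hg continuousOn_const
    Ioc_subset_Icc_self (by rw [closure_Ioc zero_ne_one])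
  have := eq_zero_of_integral_eq_zero one_pos (continuousOn_id.mul hg)
    (fun y hy => mul_nonneg hy.1 (hg0 y hy)) hint (Ioc_subset_Icc_self hx)
  exact (mul_eq_zero.1 this).resolve_left hx.1.ne'

theorem monotoneOn_Icc_of_hasDerivWithinAt {f f' : ℝ → ℝ}
    (hf : ∀ x ∈ Icc a b, HasDerivWithinAt f (f' x) (Icc a b) x)
    (hf' : ∀ x ∈ Ioo a b, 0 ≤ f' x) : MonotoneOn f (Icc a b) :=
  monotoneOn_of_hasDerivWithinAt_nonneg (convex_Icc a b) (fun x hx => (hf x hx).continuousWithinAt)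
    (by simpa only [interior_Icc] using fun x hx =>
      (hf x (Ioo_subset_Icc_self hx)).mono Ioo_subset_Icc_self)
    (by simpa only [interior_Icc] using hf')

theorem antitoneOn_Icc_of_hasDerivWithinAt {f f' : ℝ → ℝ}
    (hf : ∀ x ∈ Icc a b, HasDerivWithinAt f (f' x) (Icc a b) x)
    (hf' : ∀ x ∈ Ioo a b, f' x ≤ 0) : AntitoneOn f (Icc a b) :=
  antitoneOn_of_hasDerivWithinAt_nonpos (convex_Icc a b) (fun x hx => (hf x hx).continuousWithinAt)
    (by simpa only [interior_Icc] using fun x hx =>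
      (hf x (Ioo_subset_Icc_self hx)).mono Ioo_subset_Icc_self)
    (by simpa only [interior_Icc] using hf')

end Interval

theorem mul_integral_id_mul_le {f : ℝ → ℝ} (hf : ContinuousOn f (Icc 0 1))
    (hf0 : ∀ s ∈ Icc (0:ℝ) 1, 0 ≤ f s) {s : ℝ} (hs : s ∈ Icc (0:ℝ) 1) :
    s * ∫ y in (0:ℝ)..1, y * f y ≤ s * (∫ y in s..1, f y) + ∫ y in (0:ℝ)..s, y * f y := by
  have hint : ∀ a b, a ∈ Icc (0:ℝ) 1 → b ∈ Icc (0:ℝ) 1 → a ≤ b →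
      IntervalIntegrable (fun y => y * f y) volume a b := fun a b ha hb hab =>
    (continuousOn_id.mul (hf.mono (Icc_subset_Icc ha.1 hb.2))).intervalIntegrable_of_Icc hab
  have h0 : (0:ℝ) ∈ Icc (0:ℝ) 1 := left_mem_Icc.2 zero_le_one
  have h1 : (1:ℝ) ∈ Icc (0:ℝ) 1 := right_mem_Icc.2 zero_le_one
  rw [← integral_add_adjacent_intervals (hint 0 s h0 hs hs.1) (hint s 1 hs h1 hs.2)]
  have hright : ∫ y in s..1, y * f y ≤ ∫ y in s..1, f y :=
    integral_mono_on hs.2 (hint s 1 hs h1 hs.2)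
      ((hf.mono (Icc_subset_Icc hs.1 le_rfl)).intervalIntegrable_of_Icc hs.2)
      fun y hy => mul_le_of_le_one_left (hf0 y ⟨hs.1.trans hy.1, hy.2⟩) hy.2
  have hleft : 0 ≤ ∫ y in (0:ℝ)..s, y * f y :=
    integral_nonneg hs.1 fun y hy => mul_nonneg hy.1 (hf0 y ⟨hy.1, hy.2.trans hs.2⟩)
  rw [mul_add]
  linarith [mul_le_of_le_one_left hleft hs.2, mul_le_mul_of_nonneg_left hright hs.1]

structure IsBVPSolution (u u' q f : ℝ → ℝ) : Prop where
  hasDerivWithinAt : ∀ s ∈ Icc (0:ℝ) 1, HasDerivWithinAt u (u' s) (Icc 0 1) s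
  hasDerivWithinAt_deriv : ∀ s ∈ Icc (0:ℝ) 1, HasDerivWithinAt u' (q s * u s - f s) (Icc 0 1) s
  apply_zero : u 0 = 0
  deriv_one : u' 1 = 0

namespace IsBVPSolution

variable {u u' q f : ℝ → ℝ} {s : ℝ}

theorem continuousOn (h : IsBVPSolution u u' q f) : ContinuousOn u (Icc 0 1) :=
  fun s hs => (h.hasDerivWithinAt s hs).continuousWithinAt

theorem apply_nonneg (h : IsBVPSolution u u' q f) (hq : ∀ s ∈ Icc (0:ℝ) 1, 0 ≤ q s)
    (hf : ∀ s ∈ Icc (0:ℝ) 1, 0 ≤ f s) (hs : s ∈ Icc (0:ℝ) 1) : 0 ≤ u s := by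
  obtain ⟨s₀, hs₀, hmin⟩ :=
    isCompact_Icc.exists_isMinOn (nonempty_Icc.2 zero_le_one) h.continuousOn
  refine le_trans ?_ (hmin hs)
  by_contra! hneg
  have hcont₀ : ContinuousOn u (Icc 0 s₀) := h.continuousOn.mono (Icc_subset_Icc le_rfl hs₀.2)
  -- `a` is the last zero of `u` before its negative minimum at `s₀`
  obtain ⟨a, ⟨ha, hua⟩, ha_max⟩ :=
    (isCompact_Icc.of_isClosed_subset (hcont₀.preimage_isClosed_of_isClosed isClosed_Icc
      isClosed_singleton) inter_subset_left).exists_isGreatest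
      ⟨0, left_mem_Icc.2 hs₀.1, h.apply_zero⟩
  have hua : u a = 0 := hua
  have has₀ : a < s₀ := ha.2.lt_of_ne (by rintro rfl; linarith)
  have hneg_after : ∀ r ∈ Ioc a s₀, u r < 0 := by
    intro r hr
    by_contra! hr0
    obtain ⟨z, hz, huz⟩ := intermediate_value_Icc' hr.2 (hcont₀.mono (Icc_subset_Icc
      (ha.1.trans hr.1.le) le_rfl)) ⟨hneg.le, hr0⟩
    exact absurd (ha_max ⟨⟨ha.1.trans (hr.1.le.trans hz.1), hz.2⟩, huz⟩) (hr.1.trans_le hz.1).not_ge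
  have hIoo : ∀ r ∈ Ioo a s₀, r ∈ Ioo (0:ℝ) 1 := fun r hr =>
    ⟨ha.1.trans_lt hr.1, hr.2.trans_le hs₀.2⟩
  obtain ⟨c, hc, hslope⟩ := exists_hasDerivAt_eq_slope u u' has₀
    (hcont₀.mono (Icc_subset_Icc ha.1 le_rfl)) fun r hr =>
      (h.hasDerivWithinAt r (Ioo_subset_Icc_self (hIoo r hr))).hasDerivAt
        (Icc_mem_nhds (hIoo r hr).1 (hIoo r hr).2)
  have hc_neg : u' c < 0 := by
    rw [hslope, hua, sub_zero]; exact div_neg_of_neg_of_pos hneg (sub_pos.2 has₀)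
  -- where `u < 0` the equation makes `u'` nonincreasing
  have hanti : AntitoneOn u' (Icc c s₀) := by
    refine antitoneOn_Icc_of_hasDerivWithinAt (fun r hr => (h.hasDerivWithinAt_deriv r
      ⟨(hIoo c hc).1.le.trans hr.1, hr.2.trans hs₀.2⟩).mono
        (Icc_subset_Icc (hIoo c hc).1.le hs₀.2)) fun r hr => ?_
    have hr' : r ∈ Icc (0:ℝ) 1 := ⟨(hIoo c hc).1.le.trans hr.1.le, hr.2.le.trans hs₀.2⟩
    nlinarith [hq r hr', hf r hr', hneg_after r ⟨hc.1.trans hr.1, hr.2.le⟩]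
  have hderiv₀ : u' s₀ = 0 := by
    rcases hs₀.2.eq_or_lt with rfl | hs₀1
    · exact h.deriv_one
    · have hs₀0 : 0 < s₀ := ha.1.trans_lt has₀
      exact (hmin.isLocalMin (Icc_mem_nhds hs₀0 hs₀1)).hasDerivAt_eq_zero
        ((h.hasDerivWithinAt s₀ hs₀).hasDerivAt (Icc_mem_nhds hs₀0 hs₀1))
  linarith [hanti ⟨le_rfl, hc.2.le⟩ ⟨hc.2.le, le_rfl⟩ hc.2.le]

theorem deriv_le (h : IsBVPSolution u u' q f) (hq : ∀ s ∈ Icc (0:ℝ) 1, 0 ≤ q s)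
    (hf : ∀ s ∈ Icc (0:ℝ) 1, 0 ≤ f s) {C : ℝ} (hfC : ∀ s ∈ Icc (0:ℝ) 1, f s ≤ C)
    (hs : s ∈ Icc (0:ℝ) 1) : u' s ≤ C * (1 - s) := by
  have hmono : MonotoneOn (fun r => u' r + C * r) (Icc 0 1) := by
    refine monotoneOn_Icc_of_hasDerivWithinAt (fun r hr => (h.hasDerivWithinAt_deriv r hr).add
      ((hasDerivWithinAt_id r _).const_mul C)) fun r hr => ?_
    have hr' := Ioo_subset_Icc_self hr
    nlinarith [mul_nonneg (hq r hr') (h.apply_nonneg hq hf hr'), hfC r hr']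
  have := hmono hs (right_mem_Icc.2 zero_le_one) hs.2
  simp only [h.deriv_one] at this
  linarith

theorem apply_le (h : IsBVPSolution u u' q f) (hq : ∀ s ∈ Icc (0:ℝ) 1, 0 ≤ q s)
    (hf : ∀ s ∈ Icc (0:ℝ) 1, 0 ≤ f s) {C : ℝ} (hfC : ∀ s ∈ Icc (0:ℝ) 1, f s ≤ C)
    (hs : s ∈ Icc (0:ℝ) 1) : u s ≤ C * s := by
  have hC : 0 ≤ C := (hf 0 (left_mem_Icc.2 zero_le_one)).trans (hfC 0 (left_mem_Icc.2 zero_le_one))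
  have hanti : AntitoneOn (fun r => u r - C * r) (Icc 0 1) := by
    refine antitoneOn_Icc_of_hasDerivWithinAt (fun r hr => (h.hasDerivWithinAt r hr).sub
      ((hasDerivWithinAt_id r _).const_mul C)) fun r hr => ?_
    nlinarith [h.deriv_le hq hf hfC (Ioo_subset_Icc_self hr), hr.1]
  have := hanti (left_mem_Icc.2 zero_le_one) hs hs.1
  simp only [h.apply_zero] at this
  linarith

theorem apply_eq_zero (h : IsBVPSolution u u' q f) (hq : ∀ s ∈ Icc (0:ℝ) 1, 0 ≤ q s)
    (hf : ∀ s ∈ Icc (0:ℝ) 1, f s = 0) (hs : s ∈ Icc (0:ℝ) 1) : u s = 0 :=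
  le_antisymm
    (by simpa using h.apply_le hq (fun s hs => (hf s hs).ge) (fun s hs => (hf s hs).le) hs)
    (h.apply_nonneg hq (fun s hs => (hf s hs).ge) hs)

theorem abs_deriv_le (h : IsBVPSolution u u' q f) (hq : ∀ s ∈ Icc (0:ℝ) 1, 0 ≤ q s)
    (hf : ∀ s ∈ Icc (0:ℝ) 1, 0 ≤ f s) {C k : ℝ} (hfC : ∀ s ∈ Icc (0:ℝ) 1, f s ≤ C)
    (hqk : ∀ s ∈ Icc (0:ℝ) 1, q s ≤ k) (hs : s ∈ Icc (0:ℝ) 1) : |u' s| ≤ C * (1 + k) := by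
  have h0 : (0:ℝ) ∈ Icc (0:ℝ) 1 := left_mem_Icc.2 zero_le_one
  have hC : 0 ≤ C := (hf 0 h0).trans (hfC 0 h0)
  have hk : 0 ≤ k := (hq 0 h0).trans (hqk 0 h0)
  have hanti : AntitoneOn (fun r => u' r - k * C * r) (Icc 0 1) := by
    refine antitoneOn_Icc_of_hasDerivWithinAt (fun r hr => (h.hasDerivWithinAt_deriv r hr).sub
      ((hasDerivWithinAt_id r _).const_mul (k * C))) fun r hr => ?_
    have hr' := Ioo_subset_Icc_self hr
    have hqu : q r * u r ≤ k * C := mul_le_mul (hqk r hr')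
      ((h.apply_le hq hf hfC hr').trans (by nlinarith [hr'.2])) (h.apply_nonneg hq hf hr') hk
    nlinarith [hf r hr']
  have hlow := hanti hs (right_mem_Icc.2 zero_le_one) hs.2
  simp only [h.deriv_one] at hlow
  rw [abs_le]
  constructor <;> nlinarith [h.deriv_le hq hf hfC hs, hs.1, hs.2, mul_nonneg hk hC]

theorem exp_mul_integral_le (h : IsBVPSolution u u' q f) (hq : ∀ s ∈ Icc (0:ℝ) 1, 0 ≤ q s)
    (hf : ∀ s ∈ Icc (0:ℝ) 1, 0 ≤ f s) (hfc : ContinuousOn f (Icc 0 1)) {k : ℝ} (hk : 0 ≤ k)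
    (hqk : ∀ s ∈ Icc (0:ℝ) 1, q s ≤ k ^ 2) (hs : s ∈ Icc (0:ℝ) 1) :
    exp (-k) * ∫ y in s..1, f y ≤ exp (-k * s) * (u' s + k * u s) := by
  have h1 : (1:ℝ) ∈ Icc (0:ℝ) 1 := right_mem_Icc.2 zero_le_one
  have hanti : AntitoneOn
      (fun r => exp (-k * r) * (u' r + k * u r) - exp (-k) * ∫ y in r..1, f y) (Icc 0 1) := by
    refine antitoneOn_Icc_of_hasDerivWithinAt (fun r hr =>
      ((((hasDerivWithinAt_id r _).const_mul (-k)).exp.mul ((h.hasDerivWithinAt_deriv r hr).add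
        ((h.hasDerivWithinAt r hr).const_mul k))).sub
          ((hasDerivWithinAt_integral_Icc_left zero_le_one hfc hr).const_mul _))) fun r hr => ?_
    have hr' := Ioo_subset_Icc_self hr
    have hexp_le : exp (-k) ≤ exp (-k * r) := exp_le_exp.2 (by nlinarith [hr'.2])
    simp only [Pi.add_apply, id, mul_one]
    nlinarith [mul_nonneg (exp_pos (-k * r)).le
      (mul_nonneg (sub_nonneg.2 (hqk r hr')) (h.apply_nonneg hq hf hr')),
      mul_nonneg (sub_nonneg.2 hexp_le) (hf r hr')]
  have hmono := hanti hs h1 hs.2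
  simp only [integral_same, h.deriv_one, mul_zero, sub_zero, zero_add, mul_one] at hmono
  nlinarith [mul_nonneg (exp_pos (-k)).le (mul_nonneg hk (h.apply_nonneg hq hf h1))]

theorem le_apply (h : IsBVPSolution u u' q f) (hq : ∀ s ∈ Icc (0:ℝ) 1, 0 ≤ q s)
    (hf : ∀ s ∈ Icc (0:ℝ) 1, 0 ≤ f s) (hfc : ContinuousOn f (Icc 0 1)) {k : ℝ} (hk : 0 ≤ k)
    (hqk : ∀ s ∈ Icc (0:ℝ) 1, q s ≤ k ^ 2) (hs : s ∈ Icc (0:ℝ) 1) :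
    s * (exp (-(2 * k)) * ∫ y in (0:ℝ)..1, y * f y) ≤ u s := by
  set G : ℝ → ℝ := fun r => ∫ y in r..1, f y
  set Y : ℝ → ℝ := fun r => ∫ y in (0:ℝ)..r, y * f y
  have hG : ∀ r ∈ Icc (0:ℝ) 1, HasDerivWithinAt G (-f r) (Icc 0 1) r := fun r hr =>
    hasDerivWithinAt_integral_Icc_left zero_le_one hfc hr
  have hY : ∀ r ∈ Icc (0:ℝ) 1, HasDerivWithinAt Y (r * f r) (Icc 0 1) r := fun r hr =>
    hasDerivWithinAt_integral_Icc zero_le_one (continuousOn_id.mul hfc) hr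
  have hH : ∀ r ∈ Icc (0:ℝ) 1, exp (-k) * G r ≤ exp (-k * r) * (u' r + k * u r) := fun r hr =>
    h.exp_mul_integral_le hq hf hfc hk hqk hr
  -- integrating once more, `exp (k r) u` dominates `∫₀ʳ G = r G(r) + ∫₀ʳ y f`
  have hV : exp (-k) * (s * G s + Y s) ≤ exp (k * s) * u s := by
    have hmono : MonotoneOn (fun r => exp (k * r) * u r - exp (-k) * (r * G r + Y r))
        (Icc 0 1) := by
      refine monotoneOn_Icc_of_hasDerivWithinAt (fun r hr =>
        (((hasDerivWithinAt_id r _).const_mul k).exp.mul (h.hasDerivWithinAt r hr)).sub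
          ((((hasDerivWithinAt_id r _).mul (hG r hr)).add (hY r hr)).const_mul _)) fun r hr => ?_
      have hr' := Ioo_subset_Icc_self hr
      have hinv : exp (k * r) * exp (-k * r) = 1 := by rw [← exp_add]; ring_nf; exact exp_zero
      have hge : 1 ≤ exp (k * r) := one_le_exp (mul_nonneg hk hr'.1)
      have hP := hH r hr'
      have hP0 : 0 ≤ exp (-k * r) * (u' r + k * u r) := (mul_nonneg (exp_pos _).le
        (integral_nonneg hr'.2 fun y hy => hf y ⟨hr'.1.trans hy.1, hy.2⟩)).trans hP
      have hkey : exp (-k * r) * (u' r + k * u r) ≤ exp (k * r) * (u' r + k * u r) := by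
        nlinarith [mul_le_mul_of_nonneg_right (one_le_pow₀ (n := 2) hge) hP0]
      simp only [id, mul_one, one_mul]
      nlinarith
    have := hmono (left_mem_Icc.2 zero_le_one) hs hs.1
    simp only [G, Y, integral_same, h.apply_zero, mul_zero, zero_mul, add_zero, sub_zero] at this
    linarith
  have hF : s * ∫ y in (0:ℝ)..1, y * f y ≤ s * G s + Y s := mul_integral_id_mul_le hfc hf hs
  have hsF : 0 ≤ s * ∫ y in (0:ℝ)..1, y * f y :=
    mul_nonneg hs.1 (integral_nonneg zero_le_one fun y hy => mul_nonneg hy.1 (hf y hy))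
  have hu : u s = exp (-k * s) * (exp (k * s) * u s) := by
    rw [← mul_assoc, ← exp_add]; ring_nf; rw [exp_zero, one_mul]
  have h2k : exp (-(2 * k)) = exp (-k) * exp (-k) := by rw [← exp_add]; ring_nf
  rw [hu, h2k]
  calc s * (exp (-k) * exp (-k) * ∫ y in (0:ℝ)..1, y * f y)
      ≤ exp (-k * s) * (exp (-k) * (s * ∫ y in (0:ℝ)..1, y * f y)) := by
        nlinarith [exp_le_exp.2 (by nlinarith [hs.2] : -k ≤ -k * s),
          mul_nonneg (exp_pos (-k)).le hsF]
    _ ≤ exp (-k * s) * (exp (k * s) * u s) := mul_le_mul_of_nonneg_left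
        ((mul_le_mul_of_nonneg_left hF (exp_pos _).le).trans hV) (exp_pos _).le

end IsBVPSolution

section Parametric

theorem continuousOn_section_left {X : Type*} [TopologicalSpace X] {F : ℝ → ℝ → X} {S K : Set ℝ}
    (hF : ContinuousOn (fun p : ℝ × ℝ => F p.1 p.2) (S ×ˢ K)) {t : ℝ} (ht : t ∈ K) :
    ContinuousOn (fun s => F s t) S :=
  hF.comp (continuous_id.prodMk continuous_const).continuousOn fun _ hs => ⟨hs, ht⟩

theorem continuousOn_section_right {X : Type*} [TopologicalSpace X] {F : ℝ → ℝ → X} {S K : Set ℝ}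
    (hF : ContinuousOn (fun p : ℝ × ℝ => F p.1 p.2) (S ×ˢ K)) {s : ℝ} (hs : s ∈ S) :
    ContinuousOn (fun t => F s t) K :=
  hF.comp (continuous_const.prodMk continuous_id).continuousOn fun _ ht => ⟨hs, ht⟩

variable {E : Type*} [NormedAddCommGroup E] [NormedSpace ℝ E] {a b : ℝ}

theorem continuousOn_intervalIntegral {F : ℝ → ℝ → E} {K : Set ℝ} (hab : a ≤ b)
    (hF : ContinuousOn (fun p : ℝ × ℝ => F p.1 p.2) (Icc a b ×ˢ K)) :
    ContinuousOn (fun t => ∫ s in a..b, F s t) K := by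
  rw [continuousOn_iff_continuous_domRestrict]
  have hG : Continuous fun p : K × ℝ => F (projIcc a b hab p.2) p.1 :=
    hF.comp_continuous ((continuous_subtype_val.comp
      ((continuous_projIcc (h := hab)).comp continuous_snd)).prodMk
        (continuous_subtype_val.comp continuous_fst)) fun p => ⟨(projIcc a b hab p.2).2, p.1.2⟩
  refine (continuous_parametric_intervalIntegral_of_continuous'
    (f := fun (t : K) s => F (projIcc a b hab s) t) hG a b).congr fun t =>
    integral_congr fun s hs => ?_
  rw [uIcc_of_le hab] at hs
  simp [projIcc_of_mem hab hs]

theorem hasDerivAt_intervalIntegral_of_norm_le {F F' : ℝ → ℝ → E} {U : Set ℝ} {t₀ M : ℝ}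
    (hab : a ≤ b) (hU : U ∈ 𝓝 t₀)
    (hF : ∀ s ∈ Icc a b, ∀ t ∈ U, HasDerivAt (fun t' => F s t') (F' s t) t)
    (hFc : ∀ t ∈ U, ContinuousOn (fun s => F s t) (Icc a b))
    (hF'c : ContinuousOn (fun s => F' s t₀) (Icc a b))
    (hF'le : ∀ s ∈ Icc a b, ∀ t ∈ U, ‖F' s t‖ ≤ M) :
    HasDerivAt (fun t => ∫ s in a..b, F s t) (∫ s in a..b, F' s t₀) t₀ := by
  have hsub : uIoc a b ⊆ Icc a b := by rw [uIoc_of_le hab]; exact Ioc_subset_Icc_self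
  refine (hasDerivAt_integral_of_dominated_loc_of_deriv_le (F := fun t s => F s t)
    (F' := fun t s => F' s t) (bound := fun _ => M) hU ?_
    ((hFc t₀ (mem_of_mem_nhds hU)).intervalIntegrable_of_Icc hab)
    ((hF'c.mono hsub).aestronglyMeasurable measurableSet_uIoc)
    (ae_of_all _ fun s hs t ht => hF'le s (hsub hs) t ht) intervalIntegrable_const
    (ae_of_all _ fun s hs t ht => hF s (hsub hs) t ht)).2
  filter_upwards [hU] with t ht using ((hFc t ht).mono hsub).aestronglyMeasurable measurableSet_uIoc

theorem hasDerivWithinAt_of_mixed_partials [CompleteSpace E] {c d : ℝ} {x xs xt xts : ℝ → ℝ → E}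
    (hab : a ≤ b) (hcd : c < d)
    (hxs : ∀ t ∈ Icc c d, ∀ s ∈ Icc a b, HasDerivWithinAt (fun s' => x s' t) (xs s t) (Icc a b) s)
    (hxs_cont : ∀ t ∈ Icc c d, ContinuousOn (fun s => xs s t) (Icc a b))
    (hxt : ∀ s ∈ Icc a b, ∀ t ∈ Icc c d, HasDerivWithinAt (fun t' => x s t') (xt s t) (Icc c d) t)
    (hxts : ∀ s ∈ Icc a b, ∀ t ∈ Icc c d,
      HasDerivWithinAt (fun t' => xs s t') (xts s t) (Icc c d) t)
    (hxt_cont : ContinuousOn (fun p : ℝ × ℝ => xt p.1 p.2) (Icc a b ×ˢ Icc c d))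
    (hxts_cont : ContinuousOn (fun p : ℝ × ℝ => xts p.1 p.2) (Icc a b ×ˢ Icc c d)) :
    ∀ t ∈ Icc c d, ∀ s ∈ Icc a b,
      HasDerivWithinAt (fun s' => xt s' t) (xts s t) (Icc a b) s := by
  obtain ⟨M, hM⟩ := (isCompact_Icc.prod isCompact_Icc).exists_bound_of_continuousOn hxts_cont
  have ha : a ∈ Icc a b := left_mem_Icc.2 hab
  -- differentiate `x s t - x a t = ∫ r in a..s, xs r t` in `t`
  have hrep : ∀ s ∈ Icc a b, ∀ t ∈ Icc c d, xt s t - xt a t = ∫ r in a..s, xts r t := by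
    intro s hs
    have has : Icc a s ⊆ Icc a b := Icc_subset_Icc le_rfl hs.2
    have hFTC : ∀ t ∈ Icc c d, ∫ r in a..s, xs r t = x s t - x a t := fun t ht =>
      integral_eq_sub_of_hasDerivWithinAt_Icc hs.1
        (fun r hr => (hxs t ht r (has hr)).mono has) ((hxs_cont t ht).mono has)
    refine EqOn.of_subset_closure (s := Ioo c d) (fun t ht => ?_)
      ((continuousOn_section_right hxt_cont hs).sub (continuousOn_section_right hxt_cont ha))
      (continuousOn_intervalIntegral hs.1 (hxts_cont.mono (prod_mono has le_rfl)))
      Ioo_subset_Icc_self (by rw [closure_Ioo hcd.ne])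
    have hJ : Icc c d ∈ 𝓝 t := Icc_mem_nhds ht.1 ht.2
    refine (((hxt s hs t (Ioo_subset_Icc_self ht)).sub
      (hxt a ha t (Ioo_subset_Icc_self ht))).hasDerivAt hJ).unique ?_
    refine (hasDerivAt_intervalIntegral_of_norm_le hs.1 (Ioo_mem_nhds ht.1 ht.2)
      (fun r hr t' ht' => (hxts r (has hr) t' (Ioo_subset_Icc_self ht')).hasDerivAt
        (Icc_mem_nhds ht'.1 ht'.2))
      (fun t' ht' => (hxs_cont t' (Ioo_subset_Icc_self ht')).mono has)
      ((continuousOn_section_left hxts_cont (Ioo_subset_Icc_self ht)).mono has)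
      (fun r hr t' ht' => hM (r, t') ⟨has hr, Ioo_subset_Icc_self ht'⟩)).congr_of_eventuallyEq ?_
    filter_upwards [hJ] with t' ht' using (hFTC t' ht').symm
  intro t ht s hs
  refine ((hasDerivWithinAt_integral_Icc hab (continuousOn_section_left hxts_cont ht) hs).const_add
    (xt a t)).congr (fun r hr => ?_) ?_
  · rw [← hrep r hr t ht, add_sub_cancel]
  · rw [← hrep s hs t ht, add_sub_cancel]

end Parametric

section InnerProduct

variable {E : Type*} [NormedAddCommGroup E] [InnerProductSpace ℝ E]

theorem inner_eq_zero_of_norm_eq {v : ℝ → E} {v' : E} {S : Set ℝ} {t r : ℝ}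
    (hS : UniqueDiffWithinAt ℝ S t) (hv : HasDerivWithinAt v v' S t)
    (hnorm : ∀ t' ∈ S, ‖v t'‖ = r) (ht : t ∈ S) : ⟪v t, v'⟫ = 0 := by
  simpa using eq_zero_of_hasDerivWithinAt_of_forall_eq hS hv.norm_sq
    (fun t' ht' => by rw [hnorm t' ht']) ht

theorem integral_inner_deriv_smul_eq_zero [CompleteSpace E] {v v' w w' : ℝ → E}
    {σ σ' : ℝ → ℝ}
    (hv : ∀ s ∈ Icc (0:ℝ) 1, HasDerivWithinAt v (v' s) (Icc 0 1) s)
    (hσ : ∀ s ∈ Icc (0:ℝ) 1, HasDerivWithinAt σ (σ' s) (Icc 0 1) s)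
    (hw : ∀ s ∈ Icc (0:ℝ) 1, HasDerivWithinAt w (w' s) (Icc 0 1) s)
    (hσ'c : ContinuousOn σ' (Icc 0 1)) (hw'c : ContinuousOn w' (Icc 0 1))
    (horth : ∀ s ∈ Icc (0:ℝ) 1, ⟪w s, v' s⟫ = 0) (hv1 : v 1 = 0) (hσ0 : σ 0 = 0) :
    ∫ s in (0:ℝ)..1, ⟪v s, σ' s • w s + σ s • w' s⟫ = 0 := by
  have hvc : ContinuousOn v (Icc 0 1) := fun s hs => (hv s hs).continuousWithinAt
  have hσc : ContinuousOn σ (Icc 0 1) := fun s hs => (hσ s hs).continuousWithinAt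
  have hwc : ContinuousOn w (Icc 0 1) := fun s hs => (hw s hs).continuousWithinAt
  -- `⟪v, σ w⟫` is a primitive of the integrand, since `⟪v', σ w⟫ = 0`
  have hprim : ∀ s ∈ Icc (0:ℝ) 1, HasDerivWithinAt (fun s => ⟪v s, σ s • w s⟫)
      ⟪v s, σ' s • w s + σ s • w' s⟫ (Icc 0 1) s := fun s hs =>
    ((hv s hs).inner ℝ ((hσ s hs).smul (hw s hs))).congr_deriv (by
      rw [Pi.smul_apply', real_inner_smul_right (v' s), real_inner_comm (w s), horth s hs,
        mul_zero, add_zero, add_comm (σ s • w' s)])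
  rw [integral_eq_sub_of_hasDerivWithinAt_Icc zero_le_one hprim
    (hvc.inner ((hσ'c.smul hwc).add (hσc.smul hw'c)))]
  simp [hv1, hσ0]

theorem integral_norm_sq_eq_of_integral_inner_eq_zero {a b c d M : ℝ} {v v' : ℝ → ℝ → E}
    (hab : a ≤ b)
    (hv : ∀ s ∈ Icc a b, ∀ t ∈ Icc c d, HasDerivWithinAt (fun t' => v s t') (v' s t) (Icc c d) t)
    (hv_cont : ContinuousOn (fun p : ℝ × ℝ => v p.1 p.2) (Icc a b ×ˢ Icc c d))
    (hv'_cont : ∀ t ∈ Icc c d, ContinuousOn (fun s => v' s t) (Icc a b))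
    (hv'_le : ∀ s ∈ Icc a b, ∀ t ∈ Icc c d, ‖v' s t‖ ≤ M)
    (hwork : ∀ t ∈ Icc c d, ∫ s in a..b, ⟪v s t, v' s t⟫ = 0) :
    ∀ t ∈ Icc c d, ∫ s in a..b, ‖v s t‖ ^ 2 = ∫ s in a..b, ‖v s c‖ ^ 2 := by
  obtain ⟨N, hN⟩ := (isCompact_Icc.prod isCompact_Icc).exists_bound_of_continuousOn hv_cont
  have hcont : ContinuousOn (fun t => ∫ s in a..b, ‖v s t‖ ^ 2) (Icc c d) :=
    continuousOn_intervalIntegral hab (hv_cont.norm.pow 2)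
  have hderiv : ∀ t ∈ Ioo c d, HasDerivAt (fun t => ∫ s in a..b, ‖v s t‖ ^ 2) 0 t := by
    intro t ht
    have := hasDerivAt_intervalIntegral_of_norm_le (F := fun s t => ‖v s t‖ ^ 2)
      (F' := fun s t => 2 * ⟪v s t, v' s t⟫) (M := 2 * (N * M)) hab (Ioo_mem_nhds ht.1 ht.2)
      (fun s hs t' ht' => ((hv s hs t' (Ioo_subset_Icc_self ht')).hasDerivAt
        (Icc_mem_nhds ht'.1 ht'.2)).norm_sq)
      (fun t' ht' => (continuousOn_section_left hv_cont (Ioo_subset_Icc_self ht')).norm.pow 2)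
      (continuousOn_const.mul ((continuousOn_section_left hv_cont (Ioo_subset_Icc_self ht)).inner
        (hv'_cont t (Ioo_subset_Icc_self ht))))
      (fun s hs t' ht' => by
        have hvN := hN (s, t') ⟨hs, Ioo_subset_Icc_self ht'⟩
        rw [norm_mul, Real.norm_two]
        exact mul_le_mul_of_nonneg_left ((norm_inner_le_norm _ _).trans (mul_le_mul hvN
          (hv'_le s hs t' (Ioo_subset_Icc_self ht')) (norm_nonneg _) ((norm_nonneg _).trans hvN)))
          zero_le_two)
    rwa [intervalIntegral.integral_const_mul, hwork t (Ioo_subset_Icc_self ht), mul_zero] at this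
  intro t ht
  rcases ht.1.eq_or_lt with rfl | hct
  · rfl
  obtain ⟨ξ, -, hslope⟩ := exists_hasDerivAt_eq_slope _ _ hct
    (hcont.mono (Icc_subset_Icc le_rfl ht.2)) fun ξ hξ => hderiv ξ ⟨hξ.1, hξ.2.trans_le ht.2⟩
  exact sub_eq_zero.1 ((div_eq_zero_iff.1 hslope.symm).resolve_right (sub_pos.2 hct).ne')

theorem eq_zero_of_integral_inner_eq_zero {a b c d M t₀ : ℝ} {v v' : ℝ → ℝ → E}
    (hab : a < b)
    (hv : ∀ s ∈ Icc a b, ∀ t ∈ Icc c d, HasDerivWithinAt (fun t' => v s t') (v' s t) (Icc c d) t)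
    (hv_cont : ContinuousOn (fun p : ℝ × ℝ => v p.1 p.2) (Icc a b ×ˢ Icc c d))
    (hv'_cont : ∀ t ∈ Icc c d, ContinuousOn (fun s => v' s t) (Icc a b))
    (hv'_le : ∀ s ∈ Icc a b, ∀ t ∈ Icc c d, ‖v' s t‖ ≤ M)
    (hwork : ∀ t ∈ Icc c d, ∫ s in a..b, ⟪v s t, v' s t⟫ = 0) (ht₀ : t₀ ∈ Icc c d)
    (hv₀ : ∀ s ∈ Icc a b, v s t₀ = 0) : ∀ s ∈ Icc a b, ∀ t ∈ Icc c d, v s t = 0 := by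
  intro s hs t ht
  have henergy := integral_norm_sq_eq_of_integral_inner_eq_zero hab.le hv hv_cont hv'_cont
    hv'_le hwork
  have hE : ∫ r in a..b, ‖v r t‖ ^ 2 = 0 := by
    rw [henergy t ht, ← henergy t₀ ht₀]
    refine (integral_congr fun r hr => ?_).trans integral_zero
    rw [uIcc_of_le hab.le] at hr
    simp [hv₀ r hr]
  simpa using eq_zero_of_integral_eq_zero hab
    ((continuousOn_section_left hv_cont ht).norm.pow 2) (fun _ _ => sq_nonneg _) hE hs

end InnerProduct

theorem exists_forall_eq_zero_of_forall_div_lt {T : ℝ} {τ τs q f : ℝ → ℝ → ℝ} (hT : 0 ≤ T)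
    (hτ : ∀ t ∈ Icc (0:ℝ) T, IsBVPSolution (τ · t) (τs · t) (q · t) (f · t))
    (hq : ContinuousOn (fun p : ℝ × ℝ => q p.1 p.2) (Icc 0 1 ×ˢ Icc 0 T))
    (hf : ContinuousOn (fun p : ℝ × ℝ => f p.1 p.2) (Icc 0 1 ×ˢ Icc 0 T))
    (hq0 : ∀ t ∈ Icc (0:ℝ) T, ∀ s ∈ Icc (0:ℝ) 1, 0 ≤ q s t)
    (hf0 : ∀ t ∈ Icc (0:ℝ) T, ∀ s ∈ Icc (0:ℝ) 1, 0 ≤ f s t)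
    (hfail : ∀ c > (0:ℝ), ∃ s ∈ Ioo (0:ℝ) 1, ∃ t ∈ Icc (0:ℝ) T, τ s t / s < c) :
    ∃ t₀ ∈ Icc (0:ℝ) T, ∀ s ∈ Icc (0:ℝ) 1, f s t₀ = 0 := by
  obtain ⟨B, hB⟩ := (isCompact_Icc.prod isCompact_Icc).exists_bound_of_continuousOn hq
  have hB0 : 0 ≤ B := (norm_nonneg _).trans
    (hB (0, 0) ⟨left_mem_Icc.2 zero_le_one, left_mem_Icc.2 hT⟩)
  have hqB : ∀ t ∈ Icc (0:ℝ) T, ∀ s ∈ Icc (0:ℝ) 1, q s t ≤ √B ^ 2 := fun t ht s hs => by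
    rw [sq_sqrt hB0]; exact (Real.le_norm_self _).trans (hB (s, t) ⟨hs, ht⟩)
  have hK : ContinuousOn (fun t => ∫ y in (0:ℝ)..1, y * f y t) (Icc 0 T) :=
    continuousOn_intervalIntegral zero_le_one (continuous_fst.continuousOn.mul hf)
  obtain ⟨t₀, ht₀, hmin⟩ := isCompact_Icc.exists_isMinOn (nonempty_Icc.2 hT) hK
  refine ⟨t₀, ht₀, eq_zero_of_integral_id_mul_eq_zero (continuousOn_section_left hf ht₀)
    (hf0 t₀ ht₀) (le_antisymm ?_ (integral_nonneg zero_le_one fun y hy =>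
      mul_nonneg hy.1 (hf0 t₀ ht₀ y hy)))⟩
  -- otherwise `τ s t / s` stays above `exp (-2 √B) * min_t ∫₀¹ y f(y, t) > 0`
  by_contra! hpos
  obtain ⟨s, hs, t, ht, hlt⟩ := hfail _ (mul_pos (exp_pos (-(2 * √B))) hpos)
  have hlow := (hτ t ht).le_apply (hq0 t ht) (hf0 t ht) (continuousOn_section_left hf ht)
    (sqrt_nonneg B) (hqB t ht) (Ioo_subset_Icc_self hs)
  rw [div_lt_iff₀ hs.1] at hlt
  nlinarith [mul_le_mul_of_nonneg_left (hmin ht) (mul_nonneg hs.1.le (exp_pos (-(2 * √B))).le)]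

theorem exists_norm_smul_add_smul_le {E : Type*} [NormedAddCommGroup E] [NormedSpace ℝ E]
    {K : Set ℝ} (hK : IsCompact K) {τ τs : ℝ → ℝ → ℝ} {xs xss xts : ℝ → ℝ → E}
    (hτ : ∀ t ∈ K, IsBVPSolution (τ · t) (τs · t) (‖xss · t‖ ^ 2) (‖xts · t‖ ^ 2))
    (hxs : ∀ t ∈ K, ∀ s ∈ Icc (0:ℝ) 1, ‖xs s t‖ = 1)
    (hxss : ContinuousOn (fun p : ℝ × ℝ => xss p.1 p.2) (Icc 0 1 ×ˢ K))
    (hxts : ContinuousOn (fun p : ℝ × ℝ => xts p.1 p.2) (Icc 0 1 ×ˢ K)) :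
    ∃ M, ∀ t ∈ K, ∀ s ∈ Icc (0:ℝ) 1, ‖τs s t • xs s t + τ s t • xss s t‖ ≤ M := by
  obtain ⟨A, hA⟩ := (isCompact_Icc.prod hK).exists_bound_of_continuousOn hxss
  obtain ⟨B, hB⟩ := (isCompact_Icc.prod hK).exists_bound_of_continuousOn hxts
  refine ⟨B ^ 2 * (1 + A ^ 2) + B ^ 2 * A, fun t ht s hs => ?_⟩
  have hq0 : ∀ r ∈ Icc (0:ℝ) 1, 0 ≤ ‖xss r t‖ ^ 2 := fun _ _ => sq_nonneg _
  have hf0 : ∀ r ∈ Icc (0:ℝ) 1, 0 ≤ ‖xts r t‖ ^ 2 := fun _ _ => sq_nonneg _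
  have hqA : ∀ r ∈ Icc (0:ℝ) 1, ‖xss r t‖ ^ 2 ≤ A ^ 2 := fun r hr =>
    pow_le_pow_left₀ (norm_nonneg _) (hA (r, t) ⟨hr, ht⟩) 2
  have hfB : ∀ r ∈ Icc (0:ℝ) 1, ‖xts r t‖ ^ 2 ≤ B ^ 2 := fun r hr =>
    pow_le_pow_left₀ (norm_nonneg _) (hB (r, t) ⟨hr, ht⟩) 2
  have hτ0 := (hτ t ht).apply_nonneg hq0 hf0 hs
  have hτB : τ s t ≤ B ^ 2 :=
    ((hτ t ht).apply_le hq0 hf0 hfB hs).trans (mul_le_of_le_one_right (sq_nonneg B) hs.2)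
  calc ‖τs s t • xs s t + τ s t • xss s t‖
      ≤ |τs s t| * ‖xs s t‖ + |τ s t| * ‖xss s t‖ := by
        refine (norm_add_le _ _).trans_eq ?_
        rw [norm_smul, norm_smul, Real.norm_eq_abs, Real.norm_eq_abs]
    _ ≤ B ^ 2 * (1 + A ^ 2) + B ^ 2 * A := by
        rw [hxs t ht s hs, mul_one, abs_of_nonneg hτ0]
        exact add_le_add ((hτ t ht).abs_deriv_le hq0 hf0 hfB hqA hs)
          (mul_le_mul hτB (hA (s, t) ⟨hs, ht⟩) (norm_nonneg _) (sq_nonneg B))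

/-- Rigidity for the inextensible string without gravity (`g = 0`): if `(x, τ)` solves
`ẍ = (τ x')'`, `|x'| = 1` on `(0,1)×(0,T)` with `x(1,t) = 0`, `τ(0,t) = 0`, where `τ`
solves the two-point BVP `-τ'' + |x''|² τ = |ẋ'|²`, `τ(0) = 0`, `τ'(1) = 0` at each
time, and the stability condition fails (`inf τ(s,t)/s ≤ 0`), then `ẋ ≡ 0`,
`x(s,t) ≡ x(s,0)` and `τ ≡ 0`. -/
theorem stmt_19 (T : ℝ) (hT : 0 < T)
    (x xs xss xt xtt xts : ℝ → ℝ → EuclideanSpace ℝ (Fin 3))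
    (τ τs : ℝ → ℝ → ℝ)
    -- space derivatives
    (hxs : ∀ t ∈ Set.Icc (0:ℝ) T, ∀ s ∈ Set.Icc (0:ℝ) 1,
      HasDerivWithinAt (fun s' => x s' t) (xs s t) (Set.Icc 0 1) s)
    (hxss : ∀ t ∈ Set.Icc (0:ℝ) T, ∀ s ∈ Set.Icc (0:ℝ) 1,
      HasDerivWithinAt (fun s' => xs s' t) (xss s t) (Set.Icc 0 1) s)
    (hτs : ∀ t ∈ Set.Icc (0:ℝ) T, ∀ s ∈ Set.Icc (0:ℝ) 1,
      HasDerivWithinAt (fun s' => τ s' t) (τs s t) (Set.Icc 0 1) s)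
    -- time derivatives
    (hxt : ∀ s ∈ Set.Icc (0:ℝ) 1, ∀ t ∈ Set.Icc (0:ℝ) T,
      HasDerivWithinAt (fun t' => x s t') (xt s t) (Set.Icc 0 T) t)
    (hxtt : ∀ s ∈ Set.Icc (0:ℝ) 1, ∀ t ∈ Set.Icc (0:ℝ) T,
      HasDerivWithinAt (fun t' => xt s t') (xtt s t) (Set.Icc 0 T) t)
    (hxts : ∀ s ∈ Set.Icc (0:ℝ) 1, ∀ t ∈ Set.Icc (0:ℝ) T,
      HasDerivWithinAt (fun t' => xs s t') (xts s t) (Set.Icc 0 T) t)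
    -- regularity of the solution
    (hreg_xt : ContinuousOn (fun p : ℝ × ℝ => xt p.1 p.2)
      (Set.Icc 0 1 ×ˢ Set.Icc 0 T))
    (hreg_xts : ContinuousOn (fun p : ℝ × ℝ => xts p.1 p.2)
      (Set.Icc 0 1 ×ˢ Set.Icc 0 T))
    (hreg_xss : ContinuousOn (fun p : ℝ × ℝ => xss p.1 p.2)
      (Set.Icc 0 1 ×ˢ Set.Icc 0 T))
    -- the equation of motion with g = 0 : ẍ = (τ x')' = τ' x' + τ x''
    (heq : ∀ t ∈ Set.Icc (0:ℝ) T, ∀ s ∈ Set.Icc (0:ℝ) 1,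
      xtt s t = τs s t • xs s t + τ s t • xss s t)
    -- inextensibility
    (hconstr : ∀ t ∈ Set.Icc (0:ℝ) T, ∀ s ∈ Set.Icc (0:ℝ) 1, ‖xs s t‖ = 1)
    -- boundary conditions
    (hbc : ∀ t ∈ Set.Icc (0:ℝ) T, x 1 t = 0 ∧ τ 0 t = 0)
    -- τ solves the two-point boundary value problem -τ'' + |x''|² τ = |ẋ'|², τ'(1) = 0
    (hbvp : ∀ t ∈ Set.Icc (0:ℝ) T, ∀ s ∈ Set.Icc (0:ℝ) 1,
      HasDerivWithinAt (fun s' => τs s' t)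
        (‖xss s t‖ ^ 2 * τ s t - ‖xts s t‖ ^ 2) (Set.Icc 0 1) s)
    (hbvp1 : ∀ t ∈ Set.Icc (0:ℝ) T, τs 1 t = 0)
    -- failure of the stability condition : inf τ(s,t)/s ≤ 0
    (hfail : ∀ c > (0:ℝ), ∃ s ∈ Set.Ioo (0:ℝ) 1, ∃ t ∈ Set.Icc (0:ℝ) T,
      τ s t / s < c) :
    ∀ s ∈ Set.Icc (0:ℝ) 1, ∀ t ∈ Set.Icc (0:ℝ) T,
      xt s t = 0 ∧ x s t = x s 0 ∧ τ s t = 0 := by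
  have hI : (0:ℝ) ≤ 1 := zero_le_one
  have hbvp' : ∀ t ∈ Icc (0:ℝ) T,
      IsBVPSolution (τ · t) (τs · t) (‖xss · t‖ ^ 2) (‖xts · t‖ ^ 2) :=
    fun t ht => ⟨hτs t ht, hbvp t ht, (hbc t ht).2, hbvp1 t ht⟩
  have hxt_s := hasDerivWithinAt_of_mixed_partials hI hT hxs
    (fun t ht s hs => (hxss t ht s hs).continuousWithinAt) hxt hxts hreg_xt hreg_xts
  have hxt1 : ∀ t ∈ Icc (0:ℝ) T, xt 1 t = 0 := fun t ht =>
    eq_zero_of_hasDerivWithinAt_of_forall_eq (uniqueDiffOn_Icc hT t ht)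
      (hxt 1 (right_mem_Icc.2 hI) t ht) (fun t' ht' => (hbc t' ht').1) ht
  obtain ⟨t₀, ht₀, hrest⟩ := exists_forall_eq_zero_of_forall_div_lt hT.le hbvp'
    (hreg_xss.norm.pow 2) (hreg_xts.norm.pow 2) (fun _ _ _ _ => sq_nonneg _)
    (fun _ _ _ _ => sq_nonneg _) hfail
  have hxt₀ : ∀ s ∈ Icc (0:ℝ) 1, xt s t₀ = 0 := fun s hs => by
    have hconst := eq_of_hasDerivWithinAt_Icc_eq_zero (hxt_s t₀ ht₀)
      fun r hr => by simpa using hrest r hr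
    rw [hconst s hs, ← hconst 1 (right_mem_Icc.2 hI), hxt1 t₀ ht₀]
  have hτs_cont : ∀ t ∈ Icc (0:ℝ) T, ContinuousOn (τs · t) (Icc 0 1) := fun t ht s hs =>
    (hbvp t ht s hs).continuousWithinAt
  have hwork : ∀ t ∈ Icc (0:ℝ) T, ∫ s in (0:ℝ)..1, ⟪xt s t, xtt s t⟫ = 0 := fun t ht => by
    refine (integral_congr fun s hs => ?_).trans (integral_inner_deriv_smul_eq_zero
      (hxt_s t ht) (hτs t ht) (hxss t ht) (hτs_cont t ht) (continuousOn_section_left hreg_xss ht)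
      (fun s hs => inner_eq_zero_of_norm_eq (uniqueDiffOn_Icc hT t ht) (hxts s hs t ht)
        (fun t' ht' => hconstr t' ht' s hs) ht) (hxt1 t ht) (hbc t ht).2)
    rw [uIcc_of_le hI] at hs
    simp only [heq t ht s hs]
  obtain ⟨M, hM⟩ := exists_norm_smul_add_smul_le isCompact_Icc hbvp' hconstr hreg_xss hreg_xts
  have hxtt_cont : ∀ t ∈ Icc (0:ℝ) T, ContinuousOn (xtt · t) (Icc 0 1) := fun t ht =>
    (((hτs_cont t ht).smul fun s hs => (hxss t ht s hs).continuousWithinAt).add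
      ((hbvp' t ht).continuousOn.smul (continuousOn_section_left hreg_xss ht))).congr
        fun s hs => heq t ht s hs
  have hxt0 := eq_zero_of_integral_inner_eq_zero one_pos hxtt hreg_xt hxtt_cont
    (fun s hs t ht => by rw [heq t ht s hs]; exact hM t ht s hs) hwork ht₀ hxt₀
  refine fun s hs t ht => ⟨hxt0 s hs t ht, eq_of_hasDerivWithinAt_Icc_eq_zero (hxt s hs)
    (fun t' ht' => hxt0 s hs t' ht') t ht, (hbvp' t ht).apply_eq_zero (fun _ _ => sq_nonneg _)
      (fun r hr => ?_) hs⟩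
  rw [eq_zero_of_hasDerivWithinAt_of_forall_eq (uniqueDiffOn_Icc one_pos r hr) (hxt_s t ht r hr)
    (fun r' hr' => hxt0 r' hr' t ht) hr, norm_zero, sq, mul_zero]
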